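/- Let K be a field, d, l nonnegative integers, S a finite set, and p an off-diagonal d-tensor over K indexed by DS^d. Every off-diagonal (l+1)×(l+1) subdeterminant of a flattening of p equals the image, under the map induced by an injection [n] → S with n ≤ d·(l+1), of one of finitely many fixed polynomials in the variables y_β, β ∈ D[n]^d. Consequently, the FI-ideal of B_d generated by all off-diagonal (l+1)×(l+1) subdeterminants of flattenings is generated by finitely many elements. -/

import Mathlib

/-- The coordinate ring `B_d(S) = K[y_α : α ∈ DS^d]` of off-diagonal `d`-way
tensors indexed by the finite set `S`. -/
abbrev Bd (K : Type) [CommRing K] (d : ℕ) (S : Type) : Type :=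
  MvPolynomial {α : Fin d → S // Function.Injective α} K

/-- Insert the value `s` in position `i` of the `(d-1)`-tuple `α`. -/
def combine {S : Type} {d : ℕ} (i : Fin d) (α : {j : Fin d // j ≠ i} → S) (s : S) :
    Fin d → S := fun j => if h : j = i then s else α ⟨j, h⟩

/-- The set of off-diagonal `(l+1) × (l+1)` subdeterminants of flattenings: the
determinants of matrices `(y_{(α_j, i_k)})_{j,k}` for pairwise distinct tuples
`α₁,…,α_{l+1} ∈ DS^{d-1}` and pairwise distinct `i₁,…,i_{l+1} ∈ S` such that all
combined `d`-tuples lie in `DS^d`. -/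
def offDiagSubdets (K : Type) [CommRing K] (d l : ℕ) (S : Type) : Set (Bd K d S) :=
  {h | ∃ (i : Fin d) (rows : Fin (l + 1) → ({j : Fin d // j ≠ i} → S))
      (cols : Fin (l + 1) → S) (_ : Function.Injective rows)
      (_ : Function.Injective cols)
      (hinj : ∀ a b, Function.Injective (combine i (rows a) (cols b))),
      h = (Matrix.of fun a b =>
        (MvPolynomial.X ⟨combine i (rows a) (cols b), hinj a b⟩ : Bd K d S)).det}

/-- The map `B_d(S) → B_d(T)` induced by an injection `σ : S → T`. -/
noncomputable def BdMap {K : Type} [CommRing K] {d : ℕ} {S T : Type} (σ : S → T)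
    (hσ : Function.Injective σ) : Bd K d S →ₐ[K] Bd K d T :=
  MvPolynomial.rename fun α => ⟨σ ∘ α.1, hσ.comp α.2⟩

/-!
A subdeterminant is determined by its index `i`, its `l + 1` row tuples and its `l + 1` column
entries, which together mention at most `(l + 1)(d - 1) + (l + 1) = d(l + 1)` elements of `S`.
Relabelling these elements by `Fin n`, `n ≤ d(l + 1)`, exhibits every subdeterminant as the image
under an FI-map of a subdeterminant over `Fin n`; conversely FI-maps send subdeterminants to
subdeterminants. Since there are only finitely many subdeterminants over each `Fin n`, they
form a finite generating set.
-/

open Function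

theorem comp_combine {S T : Type} {d : ℕ} (σ : S → T) (i : Fin d)
    (α : {j : Fin d // j ≠ i} → S) (s : S) :
    σ ∘ combine i α s = combine i (σ ∘ α) (σ s) := by
  funext j
  by_cases h : j = i <;> simp [combine, h]

noncomputable def offDiagMinor {K : Type} [CommRing K] {d l : ℕ} {S : Type} (i : Fin d)
    (rows : Fin (l + 1) → ({j : Fin d // j ≠ i} → S)) (cols : Fin (l + 1) → S)
    (hinj : ∀ a b, Injective (combine i (rows a) (cols b))) : Bd K d S :=
  (Matrix.of fun a b => (MvPolynomial.X ⟨combine i (rows a) (cols b), hinj a b⟩ : Bd K d S)).det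

theorem bdMap_offDiagMinor {K : Type} [CommRing K] {d l : ℕ} {S T : Type} (σ : S → T)
    (hσ : Injective σ) (i : Fin d)
    {rows : Fin (l + 1) → ({j : Fin d // j ≠ i} → S)} {cols : Fin (l + 1) → S}
    {rows' : Fin (l + 1) → ({j : Fin d // j ≠ i} → T)} {cols' : Fin (l + 1) → T}
    (hinj : ∀ a b, Injective (combine i (rows a) (cols b)))
    (hinj' : ∀ a b, Injective (combine i (rows' a) (cols' b)))
    (hrows : ∀ a, σ ∘ rows a = rows' a) (hcols : ∀ b, σ (cols b) = cols' b) :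
    BdMap (K := K) σ hσ (offDiagMinor i rows cols hinj) = offDiagMinor i rows' cols' hinj' := by
  rw [offDiagMinor, AlgHom.map_det]
  congr 1
  ext a b
  simp only [AlgHom.mapMatrix_apply, Matrix.map_apply, Matrix.of_apply, BdMap,
    MvPolynomial.rename_X]
  congr 2
  exact Subtype.ext <| (comp_combine σ i _ _).trans (by rw [hrows, hcols])

theorem offDiagSubdets_mapsTo (K : Type) [CommRing K] (d l : ℕ) {S T : Type} (σ : S → T)
    (hσ : Injective σ) :
    Set.MapsTo (BdMap σ hσ) (offDiagSubdets K d l S) (offDiagSubdets K d l T) := by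
  rintro _ ⟨i, rows, cols, hrows, hcols, hinj, rfl⟩
  have hinj' : ∀ a b, Injective (combine i (σ ∘ rows a) (σ (cols b))) := fun a b => by
    rw [← comp_combine]
    exact hσ.comp (hinj a b)
  refine ⟨i, fun a => σ ∘ rows a, σ ∘ cols, ?_, hσ.comp hcols, hinj', ?_⟩
  · exact fun a a' h => hrows (funext fun j => hσ (congrFun h j))
  · exact bdMap_offDiagMinor σ hσ i hinj hinj' (fun _ => rfl) (fun _ => rfl)

theorem offDiagSubdets_finite (K : Type) [CommRing K] (d l : ℕ) (S : Type) [Finite S] :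
    (offDiagSubdets K d l S).Finite := by
  let Data := Σ i : Fin d, {rc : (Fin (l + 1) → ({j : Fin d // j ≠ i} → S)) × (Fin (l + 1) → S) //
    ∀ a b, Injective (combine i (rc.1 a) (rc.2 b))}
  refine (Set.finite_range fun x : Data =>
    offDiagMinor (K := K) x.1 x.2.1.1 x.2.1.2 x.2.2).subset ?_
  rintro _ ⟨i, rows, cols, -, -, hinj, rfl⟩
  exact ⟨⟨i, (rows, cols), hinj⟩, rfl⟩

theorem offDiagMinor_mem_image_bdMap {K : Type} [CommRing K] {d l : ℕ} {S T : Type}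
    (π : T → S) (hπ : Injective π) (i : Fin d)
    {rows : Fin (l + 1) → ({j : Fin d // j ≠ i} → S)} {cols : Fin (l + 1) → S}
    (hrows : Injective rows) (hcols : Injective cols)
    (hinj : ∀ a b, Injective (combine i (rows a) (cols b)))
    (hrows_range : ∀ a j, rows a j ∈ Set.range π) (hcols_range : ∀ b, cols b ∈ Set.range π) :
    offDiagMinor i rows cols hinj ∈ BdMap π hπ '' offDiagSubdets K d l T := by
  choose rows' hrows' using hrows_range
  choose cols' hcols' using hcols_range
  have hcomp : ∀ a, π ∘ rows' a = rows a := fun a => funext (hrows' a)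
  have hinj' : ∀ a b, Injective (combine i (rows' a) (cols' b)) := fun a b => by
    have := hinj a b
    rw [← hcomp, ← hcols', ← comp_combine] at this
    exact this.of_comp
  refine ⟨offDiagMinor i rows' cols' hinj', ⟨i, rows', cols', ?_, ?_, hinj', rfl⟩,
    bdMap_offDiagMinor π hπ i hinj' hinj hcomp hcols'⟩
  · exact fun a a' h => hrows (by rw [← hcomp, ← hcomp, h])
  · exact fun b b' h => hcols (by rw [← hcols', ← hcols', h])

theorem exists_bdMap_fin_eq_of_mem_offDiagSubdets {K : Type} [CommRing K] {d l : ℕ} {S : Type}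
    {h : Bd K d S} (hh : h ∈ offDiagSubdets K d l S) :
    ∃ n ≤ d * (l + 1), ∃ g ∈ offDiagSubdets K d l (Fin n),
      ∃ (π : Fin n → S) (hπ : Injective π), BdMap π hπ g = h := by
  obtain ⟨i, rows, cols, hrows, hcols, hinj, rfl⟩ := hh
  let indices : (Fin (l + 1) × {j : Fin d // j ≠ i}) ⊕ Fin (l + 1) → S :=
    Sum.elim (fun p => rows p.1 p.2) cols
  have hcard : Nat.card (Set.range indices) ≤ d * (l + 1) := by
    refine (Finite.card_range_le indices).trans_eq ?_
    simp only [Nat.card_eq_fintype_card, Fintype.card_sum, Fintype.card_prod, Fintype.card_fin,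
      Fintype.card_subtype_compl, Fintype.card_subtype_eq]
    rw [← Nat.mul_succ, Nat.succ_eq_add_one, Nat.sub_add_cancel i.pos, mul_comm]
  let e := Finite.equivFin (Set.range indices)
  let π : Fin (Nat.card (Set.range indices)) → S := Subtype.val ∘ e.symm
  have hπ : Injective π := Subtype.val_injective.comp e.symm.injective
  have hrange : Set.range indices ⊆ Set.range π := fun x hx =>
    ⟨e ⟨x, hx⟩, by simp only [π, comp_apply, e.symm_apply_apply]⟩
  obtain ⟨g, hg, hgh⟩ := offDiagMinor_mem_image_bdMap (K := K) π hπ i hrows hcols hinj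
    (fun a j => hrange ⟨Sum.inl (a, j), rfl⟩) (fun b => hrange ⟨Sum.inr b, rfl⟩)
  exact ⟨_, hcard, g, hg, π, hπ, hgh⟩

theorem offDiagSubdets_eq_bdMap_fin (K : Type) [CommRing K] (d l : ℕ) (S : Type) :
    offDiagSubdets K d l S = {h | ∃ n ≤ d * (l + 1), ∃ g ∈ offDiagSubdets K d l (Fin n),
      ∃ (π : Fin n → S) (hπ : Injective π), BdMap π hπ g = h} := by
  refine Set.Subset.antisymm (fun h hh => exists_bdMap_fin_eq_of_mem_offDiagSubdets hh) ?_
  rintro _ ⟨n, -, g, hg, π, hπ, rfl⟩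
  exact offDiagSubdets_mapsTo K d l π hπ hg

/-- The off-diagonal `(l+1)×(l+1)` subdeterminants of flattenings are, up to the
FI-action, finitely many polynomials: each subdeterminant over a set `S` is the
image, under the map induced by an injection `[n] → S` with `n ≤ d(l+1)`, of one
of finitely many fixed polynomials; consequently the FI-ideal of `B_d` generated
by all these subdeterminants is generated by finitely many elements, i.e. for
every `S` the ideal they span is spanned by the images of the fixed generators. -/
theorem offDiagSubdets_finitely_generated (K : Type) [Field K] (d l : ℕ) :
    ∃ gs : List (Σ n : ℕ, Bd K d (Fin n)),
      (∀ g ∈ gs, g.1 ≤ d * (l + 1)) ∧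
      (∀ (S : Type) (h : Bd K d S), h ∈ offDiagSubdets K d l S →
        ∃ g ∈ gs, ∃ (π : Fin g.1 → S) (hπ : Function.Injective π),
          BdMap π hπ g.2 = h) ∧
      (∀ (S : Type),
        Ideal.span (offDiagSubdets K d l S) =
          Ideal.span {x : Bd K d S | ∃ g ∈ gs, ∃ (π : Fin g.1 → S)
            (hπ : Function.Injective π), BdMap π hπ g.2 = x}) := by
  have hfin : ((Set.Iic (d * (l + 1))).sigma fun n => offDiagSubdets K d l (Fin n)).Finite := by
    rw [Set.sigma_eq_biUnion]
    exact (Set.finite_Iic _).biUnion fun n _ => (offDiagSubdets_finite K d l (Fin n)).image _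
  set gs := hfin.toFinset.toList
  have mem_gs : ∀ g, g ∈ gs ↔ g.1 ≤ d * (l + 1) ∧ g.2 ∈ offDiagSubdets K d l (Fin g.1) := by
    simp [gs]
  have hgen : ∀ S, offDiagSubdets K d l S =
      {x | ∃ g ∈ gs, ∃ (π : Fin g.1 → S) (hπ : Injective π), BdMap π hπ g.2 = x} := by
    intro S
    rw [offDiagSubdets_eq_bdMap_fin]
    simp only [Sigma.exists, mem_gs, and_assoc, exists_and_left]
  exact ⟨gs, fun g hg => ((mem_gs g).1 hg).1, fun S _ hh => (hgen S).subset hh,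
    fun S => by rw [← hgen]⟩
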